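/- Under Assumption *, suppose (μ,Λ) is a spectral pair with 0 ∈ Λ, and let ν = ν_{>1}. With Γ_0 = {0, N_1/M_1, ..., (M_1−1)N_1/M_1}, Γ = [0, N_1/M_1) ∩ ℚ = {γ_0 = 0, γ_1, γ_2, ...}, Γ_k = γ_k + Γ_0, P(γ) = {ω ∈ ℤ : γ + N_1ω ∈ Λ}, I^∞ = Γ_0 × Γ_1 × Γ_2 × ⋯, and Λ_i = ⋃_{k=0}^∞ (i_k/N_1 + P(i_k)) for i = (i_0,i_1,i_2,...) ∈ I^∞: every such Λ_i is either empty or an orthogonal set of ν. -/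

import Mathlib

open MeasureTheory Filter Topology Complex Polynomial

/-- The exponential function `e_l(x) = e^{-2πi l x}`. -/
noncomputable def expFun (l x : ℝ) : ℂ :=
  Complex.exp (((-2 * Real.pi * l * x : ℝ) : ℂ) * Complex.I)

/-- The Fourier transform `μ̂(ξ) = ∫ e^{-2πiξx} dμ(x)` of a measure on `ℝ`. -/
noncomputable def ft (μ : Measure ℝ) (ξ : ℝ) : ℂ := ∫ x, expFun ξ x ∂μ

/-- `Λ` is an orthogonal (orthonormal) set for `μ`: the exponentials `e_λ`, `λ ∈ Λ`, form an
orthonormal family in `L²(μ)`. -/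
def IsOrthoSet (μ : Measure ℝ) (Λ : Set ℝ) : Prop :=
  ∀ l₁ ∈ Λ, ∀ l₂ ∈ Λ,
    (∫ x, (starRingEnd ℂ) (expFun l₁ x) * expFun l₂ x ∂μ) = if l₁ = l₂ then 1 else 0

/-- `(μ, Λ)` is a spectral pair: the exponentials `{e_λ : λ ∈ Λ}` form an orthonormal family
which is maximal (total) in `L²(μ)`, i.e. an orthonormal basis of `L²(μ)`. -/
def IsSpectralPair (μ : Measure ℝ) (Λ : Set ℝ) : Prop :=
  IsOrthoSet μ Λ ∧
  ∀ f : ℝ → ℂ, MemLp f 2 μ →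
    (∀ l ∈ Λ, (∫ x, (starRingEnd ℂ) (expFun l x) * f x ∂μ) = 0) → f =ᵐ[μ] 0

/-- `μ` is a spectral measure: some countable `Λ ⊆ ℝ` is a spectrum of `μ`. -/
def IsSpectralMeasure (μ : Measure ℝ) : Prop :=
  ∃ Λ : Set ℝ, Λ.Countable ∧ IsSpectralPair μ Λ

/-- The uniform probability measure `δ_A` on a finite set `A ⊆ ℝ`. -/
noncomputable def uniformD (A : Finset ℝ) : Measure ℝ :=
  (A.card : ENNReal)⁻¹ • ∑ a ∈ A, Measure.dirac a

/-- The measure `δ_{c⁻¹ B}` for a finite set `B ⊆ ℤ` and a scaling factor `c`. -/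
noncomputable def scaledB (B : Finset ℤ) (c : ℝ) : Measure ℝ :=
  uniformD (B.image fun b : ℤ => (b : ℝ) / c)

/-- The finite convolutions `μ_k = δ_{N₁⁻¹B₁} ∗ δ_{(N₁N₂)⁻¹B₂} ∗ ⋯ ∗ δ_{(N₁⋯N_k)⁻¹B_k}`
(the sequences are indexed starting from `k = 1`; `μ_0 = δ_0`). -/
noncomputable def partialConv (N : ℕ → ℕ) (B : ℕ → Finset ℤ) : ℕ → Measure ℝ
  | 0 => Measure.dirac 0
  | k + 1 =>
      MeasureTheory.Measure.conv (partialConv N B k)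
        (scaledB (B (k + 1)) (∏ i ∈ Finset.Icc 1 (k + 1), (N i : ℝ)))

/-- `μ` is the infinite convolution of `{(N_k, B_k)}_{k=1}^∞`: it is a Borel probability
measure and the finite convolutions `μ_k` converge weakly to `μ`. -/
def IsInfiniteConv (N : ℕ → ℕ) (B : ℕ → Finset ℤ) (μ : Measure ℝ) : Prop :=
  IsProbabilityMeasure μ ∧
    ∀ f : BoundedContinuousFunction ℝ ℝ,
      Tendsto (fun k => ∫ x, f x ∂(partialConv N B k)) atTop (𝓝 (∫ x, f x ∂μ))

/-- `ν` is the tail infinite convolution `ν_{>k} = δ_{N_{k+1}⁻¹B_{k+1}} ∗ ⋯`. -/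
def IsNuGt (N : ℕ → ℕ) (B : ℕ → Finset ℤ) (k : ℕ) (ν : Measure ℝ) : Prop :=
  IsInfiniteConv (fun j => N (k + j)) (fun j => B (k + j)) ν

/-- A family of measures is tight. -/
def IsTightFamily {ι : Type*} (Φ : ι → Measure ℝ) : Prop :=
  ∀ ε : ENNReal, 0 < ε → ∃ K : Set ℝ, IsCompact K ∧ ∀ i, 1 - ε < Φ i K

/-- `B` is a complete residue system modulo `M`: each residue class modulo `M` contains
exactly one element of `B`. -/
def IsCRS (B : Finset ℤ) (M : ℕ) : Prop :=
  ∀ r : ZMod M, ∃! b : ℤ, b ∈ B ∧ ((b : ZMod M) = r)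

/-- `∑_{b ∈ B} x^{b - b⁎}` where `b⁎ = min B`, i.e. `x^{-b⁎} ∑_{b ∈ B} x^b`. -/
noncomputable def numerPoly (B : Finset ℤ) : Polynomial ℤ :=
  ∑ b ∈ B, Polynomial.X ^ (b - (B.min.untopD 0)).toNat

/-- `∑_{k=0}^{n-1} x^k`. -/
noncomputable def geomPoly (n : ℕ) : Polynomial ℤ :=
  ∑ k ∈ Finset.range n, Polynomial.X ^ k

/-- The character polynomial `f_B(x) = (∑_{b∈B} x^b)/(x^{b⁎} ∑_{k=0}^{#B-1} x^k)`,
obtained by dividing by the monic polynomial `∑_{k=0}^{#B-1} x^k`. -/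
noncomputable def charPoly (B : Finset ℤ) : Polynomial ℤ :=
  numerPoly B /ₘ geomPoly B.card

/-- `B` (a complete residue system modulo `M`) satisfies the uniform discrete zero
condition: `Z(f_B ∘ e^{-2πix}) ⊆ {j/M : j ∈ ℤ ∖ Mℤ}`. -/
def SatisfiesUDZ (B : Finset ℤ) (M : ℕ) : Prop :=
  {x : ℝ | Polynomial.aeval (expFun x 1) (charPoly B) = 0} ⊆
    {x : ℝ | ∃ j : ℤ, ¬ ((M : ℤ) ∣ j) ∧ x = (j : ℝ) / M}

/-- `M_B(ξ) = (1/#B) ∑_{b∈B} e^{-2πibξ}`, the Fourier transform of `δ_B`. -/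
noncomputable def MB (B : Finset ℤ) (ξ : ℝ) : ℂ :=
  (B.card : ℂ)⁻¹ * ∑ b ∈ B, expFun (b : ℝ) ξ

/-- `Q_{μ,Λ}(ξ) = ∑_{λ ∈ Λ} |μ̂(ξ+λ)|²`. -/
noncomputable def Qf (μ : Measure ℝ) (Λ : Set ℝ) (ξ : ℝ) : ℝ :=
  ∑' l : Λ, ‖ft μ (ξ + (l : ℝ))‖ ^ 2

/-- `P(γ) = {ω ∈ ℤ : γ + N₁ω ∈ Λ}`. -/
def Pset (Λ : Set ℝ) (N1 γ : ℝ) : Set ℤ := {ω : ℤ | γ + N1 * (ω : ℝ) ∈ Λ}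

/-- The translated set `γ/N₁ + P(γ)`, viewed as a subset of `ℝ`. -/
def PsetT (Λ : Set ℝ) (N1 γ : ℝ) : Set ℝ :=
  {x : ℝ | ∃ ω : ℤ, x = γ / N1 + (ω : ℝ) ∧ γ + N1 * (ω : ℝ) ∈ Λ}

/-- `Γ₀ = {0, N₁/M₁, 2N₁/M₁, …, (M₁-1)N₁/M₁}`. -/
def Gamma0 (N1 M1 : ℕ) : Set ℝ :=
  {x : ℝ | ∃ t : ℕ, t < M1 ∧ x = (t : ℝ) * ((N1 : ℝ) / (M1 : ℝ))}


/-!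
Write `ν = ν_{>1}`. Self-similarity of the infinite convolution gives
`μ̂(N₁ξ) = M_{B₁}(ξ) ν̂(ξ)`, and every `l ∈ Λ_i` has `N₁l ∈ Λ`, so for distinct `l₁, l₂ ∈ Λ_i`
orthogonality of `Λ` in `L²(μ)` gives `M_{B₁}(l₂ - l₁) ν̂(l₂ - l₁) = 0`.

Since `B₁` is a complete residue system, `x^{-min B₁} ∑_{b ∈ B₁} x^b` is
`(1 + x + ⋯ + x^{M₁-1}) f_{B₁}(x)`, so by the uniform discrete zero condition `M_{B₁}` vanishes
only on `M₁⁻¹ℤ ∖ ℤ`. But if `l₂ - l₁ = j/M₁`, the points `γ_k ∈ [0, N₁/M₁)` underlying `l₁` and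
`l₂` differ by an integer multiple of `N₁/M₁`, hence coincide; then `l₂ - l₁ ∈ ℤ` and `M₁ ∣ j`.
So `ν̂(l₂ - l₁) = 0`.
-/

lemma expFun_intCast (b : ℤ) (ξ : ℝ) : expFun b ξ = expFun ξ 1 ^ b := by
  rw [expFun, expFun, ← Complex.exp_int_mul]
  congr 1
  push_cast
  ring

lemma expFun_eq_one_iff (l x : ℝ) : expFun l x = 1 ↔ ∃ n : ℤ, l * x = n := by
  rw [expFun, Complex.exp_eq_one_iff]
  constructor
  · rintro ⟨n, hn⟩
    have him : -(2 * Real.pi * l * x) = n * (2 * Real.pi) := by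
      simpa using congrArg Complex.im hn
    exact ⟨-n, by push_cast; nlinarith [Real.pi_pos]⟩
  · rintro ⟨n, hn⟩
    refine ⟨-n, ?_⟩
    rw [mul_assoc, hn]
    push_cast
    ring

lemma conj_expFun_mul_expFun (a b x : ℝ) :
    (starRingEnd ℂ) (expFun a x) * expFun b x = expFun (b - a) x := by
  simp only [expFun, ← Complex.exp_conj, ← Complex.exp_add, map_mul, Complex.conj_ofReal,
    Complex.conj_I]
  push_cast
  ring_nf

lemma norm_expFun (l x : ℝ) : ‖expFun l x‖ = 1 := Complex.norm_exp_ofReal_mul_I _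

lemma continuous_expFun (l : ℝ) : Continuous (expFun l) := by
  unfold expFun
  fun_prop

lemma ft_eq_charFun (ρ : Measure ℝ) (ξ : ℝ) : ft ρ ξ = charFun ρ (-2 * Real.pi * ξ) := by
  rw [ft, charFun_apply_real]
  congr 1 with x
  rw [expFun]
  push_cast
  ring_nf

lemma ft_zero (ρ : Measure ℝ) [IsProbabilityMeasure ρ] : ft ρ 0 = 1 := by
  simp [ft_eq_charFun]

lemma ft_dirac_zero (ξ : ℝ) : ft (Measure.dirac 0) ξ = 1 := by
  simp [ft_eq_charFun, charFun_dirac]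

lemma ft_conv (ρ₁ ρ₂ : Measure ℝ) [IsFiniteMeasure ρ₁] [IsFiniteMeasure ρ₂] (ξ : ℝ) :
    ft (ρ₁.conv ρ₂) ξ = ft ρ₁ ξ * ft ρ₂ ξ := by
  simp only [ft_eq_charFun]
  exact charFun_conv _

lemma integral_conj_expFun_mul_expFun (ρ : Measure ℝ) (a b : ℝ) :
    ∫ x, (starRingEnd ℂ) (expFun a x) * expFun b x ∂ρ = ft ρ (b - a) := by
  simp only [conj_expFun_mul_expFun, ft]

lemma isOrthoSet_iff_ft_sub_eq_zero {ρ : Measure ℝ} [IsProbabilityMeasure ρ] {S : Set ℝ} :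
    IsOrthoSet ρ S ↔ ∀ a ∈ S, ∀ b ∈ S, a ≠ b → ft ρ (b - a) = 0 := by
  simp only [IsOrthoSet, integral_conj_expFun_mul_expFun]
  refine forall₂_congr fun a _ => forall₂_congr fun b _ => ?_
  by_cases hab : a = b
  · simp [hab, ft_zero]
  · simp [hab]

lemma isOrthoSet_of_ft_mul_eq {μ ν : Measure ℝ} [IsProbabilityMeasure μ]
    [IsProbabilityMeasure ν] {c : ℝ} (hc : c ≠ 0) {m : ℝ → ℂ}
    (hft : ∀ ξ, ft μ (c * ξ) = m ξ * ft ν ξ) {Λ T : Set ℝ} (hΛ : IsOrthoSet μ Λ)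
    (hT : ∀ l ∈ T, c * l ∈ Λ) (hm : ∀ l₁ ∈ T, ∀ l₂ ∈ T, l₁ ≠ l₂ → m (l₂ - l₁) ≠ 0) :
    IsOrthoSet ν T := by
  rw [isOrthoSet_iff_ft_sub_eq_zero] at hΛ ⊢
  intro a ha b hb hab
  have h := hΛ _ (hT a ha) _ (hT b hb) fun h => hab (mul_left_cancel₀ hc h)
  rw [← mul_sub, hft] at h
  exact (mul_eq_zero.mp h).resolve_left (hm a ha b hb hab)

instance (A : Finset ℝ) : IsFiniteMeasure (uniformD A) := by
  rcases A.eq_empty_or_nonempty with rfl | hA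
  · simp only [uniformD, Finset.sum_empty, smul_zero]
    infer_instance
  · exact Measure.smul_finite _ (by simpa using hA.ne_empty)

instance (B : Finset ℤ) (c : ℝ) : IsFiniteMeasure (scaledB B c) := by
  unfold scaledB
  infer_instance

instance (N : ℕ → ℕ) (B : ℕ → Finset ℤ) (k : ℕ) : IsFiniteMeasure (partialConv N B k) := by
  induction k with
  | zero => rw [partialConv]; infer_instance
  | succ k ih => rw [partialConv]; infer_instance

lemma ft_uniformD (A : Finset ℝ) (ξ : ℝ) :
    ft (uniformD A) ξ = (A.card : ℂ)⁻¹ * ∑ a ∈ A, expFun ξ a := by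
  rw [ft, uniformD, integral_smul_measure,
    integral_finsetSum_measure fun a _ => integrable_dirac (by simp)]
  simp [integral_dirac, Complex.real_smul]

lemma ft_scaledB (B : Finset ℤ) {c : ℝ} (hc : c ≠ 0) (ξ : ℝ) :
    ft (scaledB B c) ξ = MB B (ξ / c) := by
  have hinj : Function.Injective fun b : ℤ => (b : ℝ) / c := fun a b h => by
    simpa [div_left_inj' hc] using h
  rw [scaledB, ft_uniformD, MB, Finset.card_image_of_injective _ hinj,
    Finset.sum_image fun a _ b _ h => hinj h]
  congr 1
  refine Finset.sum_congr rfl fun b _ => ?_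
  rw [expFun, expFun]
  congr 3
  field_simp

lemma tendsto_ft_of_isInfiniteConv {N : ℕ → ℕ} {B : ℕ → Finset ℤ} {μ : Measure ℝ}
    (hμ : IsInfiniteConv N B μ) (ξ : ℝ) :
    Tendsto (fun k => ft (partialConv N B k) ξ) atTop (𝓝 (ft μ ξ)) := by
  have := hμ.1
  have hweak := (FiniteMeasure.tendsto_iff_forall_integral_tendsto
    (μs := fun k => ⟨partialConv N B k, inferInstance⟩) (μ := ⟨μ, inferInstance⟩)).mpr hμ.2
  exact (FiniteMeasure.tendsto_iff_forall_integral_rclike_tendsto ℂ).mp hweak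
    (.ofNormedAddCommGroup (expFun ξ) (continuous_expFun ξ) 1 fun x => (norm_expFun ξ x).le)

lemma prod_Icc_one_succ {M : Type*} [CommMonoid M] (f : ℕ → M) (n : ℕ) :
    ∏ i ∈ Finset.Icc 1 (n + 1), f i = f 1 * ∏ i ∈ Finset.Icc 1 n, f (1 + i) := by
  induction n with
  | zero => simp
  | succ n ih =>
    rw [Finset.prod_Icc_succ_top (by omega), ih, Finset.prod_Icc_succ_top (by omega), mul_assoc,
      add_comm 1 (n + 1)]

lemma ft_partialConv_succ {N : ℕ → ℕ} (B : ℕ → Finset ℤ) (hN : ∀ i ≥ 1, N i ≠ 0) (k : ℕ)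
    (ξ : ℝ) :
    ft (partialConv N B (k + 1)) ξ =
      MB (B 1) (ξ / N 1) *
        ft (partialConv (fun j => N (1 + j)) (fun j => B (1 + j)) k) (ξ / N 1) := by
  have hprod (n : ℕ) : ∏ i ∈ Finset.Icc 1 n, (N i : ℝ) ≠ 0 :=
    Finset.prod_ne_zero_iff.mpr fun i hi => Nat.cast_ne_zero.mpr (hN i (Finset.mem_Icc.mp hi).1)
  induction k with
  | zero =>
    simp only [partialConv]
    rw [ft_conv, ft_scaledB _ (hprod _), ft_dirac_zero, ft_dirac_zero]
    simp
  | succ k ih =>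
    have hprod' : ∏ i ∈ Finset.Icc 1 (k + 1), (N (1 + i) : ℝ) ≠ 0 := by
      simpa [prod_Icc_one_succ, hN 1 le_rfl] using hprod (k + 2)
    rw [partialConv, ft_conv, ih, ft_scaledB _ (hprod _), partialConv, ft_conv,
      ft_scaledB _ hprod', prod_Icc_one_succ, div_div, add_comm 1 (k + 1)]
    ring

lemma ft_eq_MB_mul_ft {N : ℕ → ℕ} {B : ℕ → Finset ℤ} {μ ν : Measure ℝ}
    (hN : ∀ i ≥ 1, N i ≠ 0) (hμ : IsInfiniteConv N B μ)
    (hν : IsInfiniteConv (fun j => N (1 + j)) (fun j => B (1 + j)) ν) (ξ : ℝ) :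
    ft μ (N 1 * ξ) = MB (B 1) ξ * ft ν ξ := by
  have hN1 : (N 1 : ℝ) ≠ 0 := Nat.cast_ne_zero.mpr (hN 1 le_rfl)
  refine tendsto_nhds_unique
    ((tendsto_ft_of_isInfiniteConv hμ _).comp (tendsto_add_atTop_nat 1)) ?_
  simpa only [Function.comp_def, ft_partialConv_succ B hN, mul_div_cancel_left₀ _ hN1]
    using (tendsto_ft_of_isInfiniteConv hν ξ).const_mul (MB (B 1) ξ)

section ResidueSystem

variable {B : Finset ℤ} {M : ℕ}

lemma IsCRS.sum_intCast [NeZero M] {β : Type*} [AddCommMonoid β] (h : IsCRS B M)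
    (f : ZMod M → β) : ∑ b ∈ B, f b = ∑ r, f r :=
  Finset.sum_bij (fun b _ => (b : ZMod M)) (fun _ _ => Finset.mem_univ _)
    (fun a ha _ hb hab => (h a).unique ⟨ha, rfl⟩ ⟨hb, hab.symm⟩)
    (fun r _ => let ⟨b, ⟨hb, hbr⟩, _⟩ := h r; ⟨b, hb, hbr⟩) fun _ _ => rfl

lemma IsCRS.card_eq [NeZero M] (h : IsCRS B M) : B.card = M := by
  rw [Finset.card_eq_sum_ones, IsCRS.sum_intCast h fun _ => 1, Finset.sum_const,
    Finset.card_univ, ZMod.card, smul_eq_mul, mul_one]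

lemma sum_X_pow_val_eq_geomPoly [NeZero M] : ∑ r : ZMod M, (X : ℤ[X]) ^ r.val = geomPoly M := by
  obtain ⟨n, rfl⟩ : ∃ n, M = n + 1 := Nat.exists_eq_succ_of_ne_zero (NeZero.ne M)
  exact Fin.sum_univ_eq_sum_range _ _

lemma geomPoly_dvd_X_pow_sub_X_pow_mod (e : ℕ) :
    geomPoly M ∣ (X : ℤ[X]) ^ e - X ^ (e % M) := by
  have hdvd : geomPoly M ∣ ((X : ℤ[X]) ^ M) ^ (e / M) - 1 :=
    (Dvd.intro _ (by rw [geomPoly, geom_sum_mul]) : geomPoly M ∣ (X : ℤ[X]) ^ M - 1).trans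
      (by simpa only [one_pow] using sub_dvd_pow_sub_pow ((X : ℤ[X]) ^ M) 1 (e / M))
  calc geomPoly M ∣ (((X : ℤ[X]) ^ M) ^ (e / M) - 1) * X ^ (e % M) := hdvd.mul_right _
    _ = X ^ e - X ^ (e % M) := by
      rw [sub_mul, one_mul, ← pow_mul, ← pow_add, Nat.div_add_mod]

lemma untopD_min_le {b : ℤ} (hb : b ∈ B) : B.min.untopD 0 ≤ b := by
  rw [← Finset.coe_min' ⟨b, hb⟩, WithTop.untopD_coe]
  exact Finset.min'_le B b hb

lemma geomPoly_dvd_numerPoly [NeZero M] (h : IsCRS B M) : geomPoly M ∣ numerPoly B := by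
  set m := B.min.untopD 0
  have hres : ∑ b ∈ B, (X : ℤ[X]) ^ ((b - m).toNat % M) = geomPoly M := by
    have hval (b) (hb : b ∈ B) : (b - m).toNat % M = ((b : ZMod M) - m).val := by
      rw [← ZMod.val_natCast, ← Int.cast_natCast,
        Int.toNat_of_nonneg (sub_nonneg.mpr (untopD_min_le hb)), Int.cast_sub]
    rw [Finset.sum_congr rfl fun b hb => by rw [hval b hb],
      IsCRS.sum_intCast h fun r => (X : ℤ[X]) ^ (r - m).val,
      Fintype.sum_equiv (Equiv.subRight (m : ZMod M)) (fun r => (X : ℤ[X]) ^ (r - m).val)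
        (fun r => X ^ r.val) fun _ => rfl,
      sum_X_pow_val_eq_geomPoly]
  rw [← dvd_sub_self_right]
  calc geomPoly M ∣ ∑ b ∈ B, ((X : ℤ[X]) ^ (b - m).toNat - X ^ ((b - m).toNat % M)) :=
        Finset.dvd_sum fun b _ => geomPoly_dvd_X_pow_sub_X_pow_mod _
    _ = numerPoly B - geomPoly M := by rw [Finset.sum_sub_distrib, hres, numerPoly]

lemma numerPoly_eq_geomPoly_mul_charPoly [NeZero M] (h : IsCRS B M) :
    numerPoly B = geomPoly M * charPoly B := by
  have hmonic : (geomPoly M).Monic := monic_geom_sum_X (NeZero.ne M)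
  have hmod := (modByMonic_eq_zero_iff_dvd hmonic).mpr (geomPoly_dvd_numerPoly h)
  rw [charPoly, IsCRS.card_eq h]
  simpa [hmod] using (modByMonic_add_div (numerPoly B) (geomPoly M)).symm

lemma aeval_numerPoly_mul_zpow {z : ℂ} (hz : z ≠ 0) :
    aeval z (numerPoly B) * z ^ B.min.untopD 0 = ∑ b ∈ B, z ^ b := by
  rw [numerPoly, map_sum, Finset.sum_mul]
  refine Finset.sum_congr rfl fun b hb => ?_
  rw [map_pow, aeval_X, ← zpow_natCast, Int.toNat_of_nonneg (sub_nonneg.mpr (untopD_min_le hb)),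
    ← zpow_add₀ hz, sub_add_cancel]

lemma MB_eq_sum_zpow (ξ : ℝ) : MB B ξ = (B.card : ℂ)⁻¹ * ∑ b ∈ B, expFun ξ 1 ^ b := by
  simp only [MB, expFun_intCast]

lemma exists_int_div_of_aeval_geomPoly_eq_zero [NeZero M] {ξ : ℝ}
    (h : aeval (expFun ξ 1) (geomPoly M) = 0) : ∃ j : ℤ, ¬ (M : ℤ) ∣ j ∧ ξ = j / M := by
  have hM : (M : ℝ) ≠ 0 := Nat.cast_ne_zero.mpr (NeZero.ne M)
  set z := expFun ξ 1
  have hsum : ∑ k ∈ Finset.range M, z ^ k = 0 := by simpa [geomPoly] using h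
  have hz1 : z ≠ 1 := fun h1 => by simp [h1, NeZero.ne M] at hsum
  have hzM : expFun (M : ℤ) ξ = 1 := by
    rw [expFun_intCast, zpow_natCast, ← sub_eq_zero, ← geom_sum_mul, hsum, zero_mul]
  obtain ⟨j, hj⟩ := (expFun_eq_one_iff _ _).mp hzM
  push_cast at hj
  refine ⟨j, fun ⟨t, ht⟩ => hz1 ((expFun_eq_one_iff _ _).mpr ⟨t, mul_left_cancel₀ hM ?_⟩), ?_⟩
  · rw [mul_one, hj, ht]
    push_cast
    rfl
  · rw [eq_div_iff hM]
    linarith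

theorem exists_int_div_of_MB_eq_zero [NeZero M] (hCRS : IsCRS B M) (hUDZ : SatisfiesUDZ B M)
    {ξ : ℝ} (h : MB B ξ = 0) : ∃ j : ℤ, ¬ (M : ℤ) ∣ j ∧ ξ = j / M := by
  have hz : expFun ξ 1 ≠ 0 := Complex.exp_ne_zero _
  have hnumer : aeval (expFun ξ 1) (numerPoly B) = 0 := by
    have hcard : (B.card : ℂ)⁻¹ ≠ 0 := by simp [IsCRS.card_eq hCRS, NeZero.ne M]
    have hsum := (mul_eq_zero.mp (MB_eq_sum_zpow (B := B) ξ ▸ h)).resolve_left hcard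
    rw [← aeval_numerPoly_mul_zpow hz] at hsum
    exact (mul_eq_zero.mp hsum).resolve_right (zpow_ne_zero _ hz)
  rw [numerPoly_eq_geomPoly_mul_charPoly hCRS, map_mul] at hnumer
  rcases mul_eq_zero.mp hnumer with hgeom | hchar
  · exact exists_int_div_of_aeval_geomPoly_eq_zero hgeom
  · exact hUDZ hchar

end ResidueSystem

lemma eq_of_mem_Ico_of_sub_eq_intCast_mul {c x y : ℝ} (hx : x ∈ Set.Ico 0 c)
    (hy : y ∈ Set.Ico 0 c) {n : ℤ} (h : x - y = n * c) : x = y := by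
  have hc : 0 < c := hx.1.trans_lt hx.2
  have h1 : (n : ℝ) < 1 := by
    refine lt_of_mul_lt_mul_right ?_ hc.le
    linarith [hx.2, hy.1]
  have h2 : (-1 : ℝ) < n := by
    refine lt_of_mul_lt_mul_right ?_ hc.le
    linarith [hx.1, hy.2]
  have hn : n = 0 := by
    have : n < 1 := by exact_mod_cast h1
    have : -1 < n := by exact_mod_cast h2
    omega
  simpa [hn, sub_eq_zero] using h

lemma mul_mem_of_mem_PsetT {Λ : Set ℝ} {c γ x : ℝ} (hc : c ≠ 0) (hx : x ∈ PsetT Λ c γ) :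
    c * x ∈ Λ := by
  obtain ⟨ω, rfl, h⟩ := hx
  convert h using 1
  field_simp

lemma natCast_dvd_of_sub_eq_div {N M : ℕ} {Λ : Set ℝ} {g i : ℕ → ℝ} (hN : N ≠ 0) (hM : M ≠ 0)
    (hg : Function.Injective g) (hgmem : ∀ k, g k ∈ Set.Ico 0 ((N : ℝ) / M))
    (hi : ∀ k, ∃ y ∈ Gamma0 N M, i k = g k + y) {l₁ l₂ : ℝ}
    (hl₁ : l₁ ∈ ⋃ k, PsetT Λ N (i k)) (hl₂ : l₂ ∈ ⋃ k, PsetT Λ N (i k)) {j : ℤ}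
    (hj : l₂ - l₁ = j / M) : (M : ℤ) ∣ j := by
  obtain ⟨_, ⟨k₁, rfl⟩, ω₁, rfl, -⟩ := hl₁
  obtain ⟨_, ⟨k₂, rfl⟩, ω₂, rfl, -⟩ := hl₂
  obtain ⟨_, ⟨t₁, -, rfl⟩, hi₁⟩ := hi k₁
  obtain ⟨_, ⟨t₂, -, rfl⟩, hi₂⟩ := hi k₂
  have hgk : g k₂ - g k₁ = ((j - t₂ + t₁ - M * (ω₂ - ω₁) : ℤ) : ℝ) * (N / M) := by
    rw [hi₁, hi₂] at hj
    field_simp at hj ⊢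
    push_cast
    linarith
  obtain rfl : k₂ = k₁ := hg (eq_of_mem_Ico_of_sub_eq_intCast_mul (hgmem k₂) (hgmem k₁) hgk)
  have hω : ((ω₂ - ω₁ : ℤ) : ℝ) = j / M := by
    push_cast
    linarith
  rw [eq_div_iff (Nat.cast_ne_zero.mpr hM)] at hω
  exact ⟨ω₂ - ω₁, by rw [mul_comm]; exact_mod_cast hω.symm⟩

theorem stmt15_general
    (N M : ℕ → ℕ) (B : ℕ → Finset ℤ) (μ : Measure ℝ) (ν : ℕ → Measure ℝ)
    (hM : ∀ k ≥ 1, 2 ≤ M k) (hMN : ∀ k ≥ 1, M k ≤ N k)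
    (hCRS : ∀ k ≥ 1, IsCRS (B k) (M k))
    (hUDZ : ∀ k ≥ 1, SatisfiesUDZ (B k) (M k))
    (hμ : IsInfiniteConv N B μ)
    (hν : ∀ k ≥ 1, IsNuGt N B k (ν k))
    (Λ : Set ℝ) (hΛ : IsSpectralPair μ Λ)
    (g : ℕ → ℝ) (hginj : Function.Injective g)
    (hgrange : Set.range g =
      {x : ℝ | (∃ q : ℚ, x = (q : ℝ)) ∧ 0 ≤ x ∧ x < (N 1 : ℝ) / (M 1 : ℝ)}) :
    ∀ i : ℕ → ℝ, (∀ k, ∃ y ∈ Gamma0 (N 1) (M 1), i k = g k + y) →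
      (⋃ k, PsetT Λ (N 1) (i k)) = ∅ ∨
        IsOrthoSet (ν 1) (⋃ k, PsetT Λ (N 1) (i k)) := by
  intro i hi
  have hN : ∀ k ≥ 1, N k ≠ 0 := fun k hk => by linarith [hM k hk, hMN k hk]
  have : NeZero (M 1) := ⟨by linarith [hM 1 le_rfl]⟩
  have hν1 := hν 1 le_rfl
  have := hμ.1
  have := hν1.1
  have hgmem (k : ℕ) : g k ∈ Set.Ico 0 ((N 1 : ℝ) / M 1) :=
    (hgrange.subset ⟨k, rfl⟩).2
  refine .inr (isOrthoSet_of_ft_mul_eq (Nat.cast_ne_zero.mpr (hN 1 le_rfl))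
    (ft_eq_MB_mul_ft hN hμ hν1) hΛ.1 (fun l hl => ?_) fun l₁ hl₁ l₂ hl₂ _ hMB => ?_)
  · obtain ⟨_, ⟨k, rfl⟩, hl⟩ := hl
    exact mul_mem_of_mem_PsetT (Nat.cast_ne_zero.mpr (hN 1 le_rfl)) hl
  · obtain ⟨j, hj, hξ⟩ := exists_int_div_of_MB_eq_zero (hCRS 1 le_rfl) (hUDZ 1 le_rfl) hMB
    exact hj (natCast_dvd_of_sub_eq_div (hN 1 le_rfl) (NeZero.ne _) hginj hgmem hi hl₁ hl₂ hξ)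

theorem stmt15
    (N M : ℕ → ℕ) (B : ℕ → Finset ℤ) (μ : Measure ℝ) (ν : ℕ → Measure ℝ)
    (hM : ∀ k ≥ 1, 2 ≤ M k) (hMN : ∀ k ≥ 1, M k ≤ N k)
    (hCRS : ∀ k ≥ 1, IsCRS (B k) (M k))
    (hUDZ : ∀ k ≥ 1, SatisfiesUDZ (B k) (M k))
    (hμ : IsInfiniteConv N B μ)
    (hν : ∀ k ≥ 1, IsNuGt N B k (ν k))
    (htight : IsTightFamily fun k => ν (k + 1))
    (Λ : Set ℝ) (hΛ : IsSpectralPair μ Λ) (h0 : (0 : ℝ) ∈ Λ)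
    (g : ℕ → ℝ) (hg0 : g 0 = 0) (hginj : Function.Injective g)
    (hgrange : Set.range g =
      {x : ℝ | (∃ q : ℚ, x = (q : ℝ)) ∧ 0 ≤ x ∧ x < (N 1 : ℝ) / (M 1 : ℝ)}) :
    ∀ i : ℕ → ℝ, (∀ k, ∃ y ∈ Gamma0 (N 1) (M 1), i k = g k + y) →
      (⋃ k, PsetT Λ (N 1) (i k)) = ∅ ∨
        IsOrthoSet (ν 1) (⋃ k, PsetT Λ (N 1) (i k)) :=
  stmt15_general N M B μ ν hM hMN hCRS hUDZ hμ hν Λ hΛ g hginj hgrange
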